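/- arXiv:2510.03338 — 5 statements merged into one kernel-verified Lean document; each statement's English description precedes it below -/
import Mathlib

section
/- Let α > 0, μ ∈ ℝ, σ > 0 and ξ ∈ ℝ with ξ ≠ 0 and ξ > −(1+α)/α. Then the integral of f(x; μ,σ,ξ)^{1+α} over the support D is finite and equals σ^{−α} · (1/(1+α))^{α(ξ+1)+1} · Γ(α(ξ+1)+1), where Γ is the Gamma function. -/
open MeasureTheory Real

/-- The Generalized Extreme-Value (GEV) density with shape `ξ ≠ 0`:
`f(x; μ,σ,ξ) = (1/σ) t(x)^{-(ξ+1)/ξ} exp(-t(x)^{-1/ξ})` on the support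
`D = {x | t(x) > 0}` where `t(x) = 1 + ξ (x-μ)/σ`, and `0` otherwise. -/
noncomputable def gevDensity (μ σ ξ x : ℝ) : ℝ :=
  if 0 < 1 + ξ * ((x - μ) / σ) then
    σ⁻¹ * (1 + ξ * ((x - μ) / σ)) ^ (-(ξ + 1) / ξ) *
      Real.exp (-((1 + ξ * ((x - μ) / σ)) ^ (-1 / ξ)))
  else 0

/-!
Substitute `y = t(x) ^ (-1/ξ)`, so that the GEV distribution function is `exp (-y)` and
`f(x) dx = exp (-y) dy` up to sign. The inverse substitution `x = μ + σ (y ^ (-ξ) - 1) / ξ`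
maps `(0, ∞)` bijectively onto the support, with `|dx/dy| = σ y ^ (-ξ-1)` and
`f(x) = σ⁻¹ y ^ (ξ+1) e ^ (-y)`. Hence
`f(x) ^ (1+α) dx = σ ^ (-α) y ^ (α(ξ+1)) e ^ (-(1+α) y) dy`, a Gamma integral,
which converges exactly when `α(ξ+1) > -1`.
-/

open Set

noncomputable def gevOfReduced (μ σ ξ y : ℝ) : ℝ :=
  μ + σ * (y ^ (-ξ) - 1) / ξ

section GevSubstitution

variable {μ σ ξ : ℝ}

theorem one_add_mul_gevOfReduced (hσ : σ ≠ 0) (hξ : ξ ≠ 0) (y : ℝ) :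
    1 + ξ * ((gevOfReduced μ σ ξ y - μ) / σ) = y ^ (-ξ) := by
  unfold gevOfReduced
  field_simp
  ring

theorem hasDerivAt_gevOfReduced (hξ : ξ ≠ 0) {y : ℝ} (hy : y ≠ 0) :
    HasDerivAt (gevOfReduced μ σ ξ) (-σ * y ^ (-ξ - 1)) y := by
  refine (((((hasDerivAt_rpow_const (p := -ξ) (Or.inl hy)).sub_const 1).const_mul σ).div_const
    ξ).const_add μ).congr_deriv ?_
  field_simp

theorem injOn_gevOfReduced (hσ : σ ≠ 0) (hξ : ξ ≠ 0) :
    InjOn (gevOfReduced μ σ ξ) (Ioi 0) := by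
  intro a ha b hb hab
  have hpow : a ^ (-ξ) = b ^ (-ξ) := by
    rw [← one_add_mul_gevOfReduced (μ := μ) hσ hξ, ← one_add_mul_gevOfReduced (μ := μ) hσ hξ,
      hab]
  exact rpow_left_injOn (neg_ne_zero.mpr hξ) (le_of_lt (mem_Ioi.1 ha) : 0 ≤ a)
    (le_of_lt (mem_Ioi.1 hb) : 0 ≤ b) hpow

theorem image_gevOfReduced_Ioi (hσ : σ ≠ 0) (hξ : ξ ≠ 0) :
    gevOfReduced μ σ ξ '' Ioi 0 = {x : ℝ | 0 < 1 + ξ * ((x - μ) / σ)} := by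
  ext x
  constructor
  · rintro ⟨y, hy, rfl⟩
    rw [mem_ofPred_eq, one_add_mul_gevOfReduced hσ hξ]
    exact rpow_pos_of_pos hy _
  · intro hx
    refine ⟨(1 + ξ * ((x - μ) / σ)) ^ (-1 / ξ), rpow_pos_of_pos hx _, ?_⟩
    have hinv : ((1 + ξ * ((x - μ) / σ)) ^ (-1 / ξ)) ^ (-ξ) = 1 + ξ * ((x - μ) / σ) := by
      rw [← rpow_mul (le_of_lt hx), show -1 / ξ * (-ξ) = 1 by field_simp, rpow_one]
    rw [gevOfReduced, hinv]
    field_simp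
    ring

theorem gevDensity_gevOfReduced (hσ : σ ≠ 0) (hξ : ξ ≠ 0) {y : ℝ} (hy : 0 < y) :
    gevDensity μ σ ξ (gevOfReduced μ σ ξ y) = σ⁻¹ * y ^ (ξ + 1) * exp (-y) := by
  have ht := one_add_mul_gevOfReduced (μ := μ) hσ hξ y
  rw [gevDensity, if_pos (ht ▸ rpow_pos_of_pos hy _), ht, ← rpow_mul hy.le, ← rpow_mul hy.le,
    show -ξ * (-(ξ + 1) / ξ) = ξ + 1 by field_simp, show -ξ * (-1 / ξ) = 1 by field_simp,
    rpow_one]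

theorem abs_deriv_gevOfReduced (hσ : 0 < σ) {y : ℝ} (hy : 0 < y) :
    |-σ * y ^ (-ξ - 1)| = σ * y ^ (-ξ - 1) := by
  rw [neg_mul, abs_neg, abs_of_pos (by positivity)]

variable {E : Type*} [NormedAddCommGroup E] [NormedSpace ℝ E]

theorem integrableOn_gevSupport_iff (hσ : 0 < σ) (hξ : ξ ≠ 0) (F : ℝ → E) :
    IntegrableOn F {x : ℝ | 0 < 1 + ξ * ((x - μ) / σ)} ↔
      IntegrableOn (fun y => (σ * y ^ (-ξ - 1)) • F (gevOfReduced μ σ ξ y)) (Ioi 0) := by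
  rw [← image_gevOfReduced_Ioi hσ.ne' hξ, integrableOn_image_iff_integrableOn_abs_deriv_smul
    measurableSet_Ioi (fun y hy => (hasDerivAt_gevOfReduced hξ (ne_of_gt hy)).hasDerivWithinAt)
    (injOn_gevOfReduced hσ.ne' hξ)]
  exact integrableOn_congr_fun (fun y hy => by rw [abs_deriv_gevOfReduced hσ hy])
    measurableSet_Ioi

theorem integral_gevSupport (hσ : 0 < σ) (hξ : ξ ≠ 0) (F : ℝ → E) :
    ∫ x in {x : ℝ | 0 < 1 + ξ * ((x - μ) / σ)}, F x =
      ∫ y in Ioi 0, (σ * y ^ (-ξ - 1)) • F (gevOfReduced μ σ ξ y) := by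
  rw [← image_gevOfReduced_Ioi hσ.ne' hξ, integral_image_eq_integral_abs_deriv_smul
    measurableSet_Ioi (fun y hy => (hasDerivAt_gevOfReduced hξ (ne_of_gt hy)).hasDerivWithinAt)
    (injOn_gevOfReduced hσ.ne' hξ)]
  exact setIntegral_congr_fun measurableSet_Ioi
    (fun y hy => by rw [abs_deriv_gevOfReduced hσ hy])

theorem mul_gevDensity_gevOfReduced_rpow (hσ : 0 < σ) (hξ : ξ ≠ 0) (α : ℝ) {y : ℝ}
    (hy : 0 < y) :
    σ * y ^ (-ξ - 1) * gevDensity μ σ ξ (gevOfReduced μ σ ξ y) ^ (1 + α) =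
      σ ^ (-α) * (y ^ (α * (ξ + 1)) * exp (-((1 + α) * y))) := by
  rw [gevDensity_gevOfReduced hσ.ne' hξ hy, mul_rpow (by positivity) (exp_pos _).le,
    mul_rpow (by positivity) (by positivity), ← exp_mul, ← rpow_mul hy.le, inv_rpow hσ.le,
    ← rpow_neg hσ.le]
  have hσpow : σ * σ ^ (-(1 + α)) = σ ^ (-α) := by
    rw [show -α = 1 + -(1 + α) by ring, rpow_add hσ, rpow_one]
  have hypow : y ^ (-ξ - 1) * y ^ ((ξ + 1) * (1 + α)) = y ^ (α * (ξ + 1)) := by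
    rw [← rpow_add hy]
    ring_nf
  calc σ * y ^ (-ξ - 1) * (σ ^ (-(1 + α)) * y ^ ((ξ + 1) * (1 + α)) * exp (-y * (1 + α)))
      = (σ * σ ^ (-(1 + α))) * (y ^ (-ξ - 1) * y ^ ((ξ + 1) * (1 + α))) *
          exp (-y * (1 + α)) := by ring
    _ = σ ^ (-α) * (y ^ (α * (ξ + 1)) * exp (-((1 + α) * y))) := by
        rw [hσpow, hypow, show -y * (1 + α) = -((1 + α) * y) by ring, mul_assoc]

end GevSubstitution

theorem integrableOn_rpow_mul_exp_neg_mul_Ioi {s b : ℝ} (hs : -1 < s) (hb : 0 < b) :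
    IntegrableOn (fun y : ℝ => y ^ s * exp (-(b * y))) (Ioi 0) := by
  simpa only [rpow_one, neg_mul] using integrableOn_rpow_mul_exp_neg_mul_rpow hs one_pos hb

theorem stmt_0 (α μ σ ξ : ℝ) (hα : 0 < α) (hσ : 0 < σ) (hξ0 : ξ ≠ 0)
    (hξ : ξ > -(1 + α) / α) :
    IntegrableOn (fun x => gevDensity μ σ ξ x ^ (1 + α))
      {x : ℝ | 0 < 1 + ξ * ((x - μ) / σ)} ∧
    ∫ x in {x : ℝ | 0 < 1 + ξ * ((x - μ) / σ)}, gevDensity μ σ ξ x ^ (1 + α) =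
      σ ^ (-α) * (1 / (1 + α)) ^ (α * (ξ + 1) + 1) * Real.Gamma (α * (ξ + 1) + 1) := by
  have hs : -1 < α * (ξ + 1) := by
    rw [gt_iff_lt, div_lt_iff₀ hα] at hξ
    linarith
  have hb : 0 < 1 + α := by linarith
  have hpt : EqOn
      (fun y => (σ * y ^ (-ξ - 1)) • gevDensity μ σ ξ (gevOfReduced μ σ ξ y) ^ (1 + α))
      (fun y => σ ^ (-α) * (y ^ (α * (ξ + 1)) * exp (-((1 + α) * y)))) (Ioi 0) :=
    fun y hy => mul_gevDensity_gevOfReduced_rpow hσ hξ0 α hy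
  refine ⟨(integrableOn_gevSupport_iff hσ hξ0 _).2
    (IntegrableOn.congr_fun ((integrableOn_rpow_mul_exp_neg_mul_Ioi hs hb).const_mul _) hpt.symm
      measurableSet_Ioi), ?_⟩
  rw [integral_gevSupport hσ hξ0, setIntegral_congr_fun measurableSet_Ioi hpt,
    integral_const_mul, mul_assoc, ← integral_rpow_mul_exp_neg_mul_Ioi (by linarith) hb,
    add_sub_cancel_right]
end

section
/- Let μ ∈ ℝ, σ > 0 and ξ ≠ 0, and let x be in the interior of the support D. Then the negative second partial derivative of log f(x; μ,σ,ξ) with respect to μ twice equals ((ξ+1)/σ²) · t(x)^{−2} · (t(x)^{−1/ξ} − ξ). -/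
open Real

/-!
On the support, `log f = -log σ - (1 + 1/ξ) log t - t^(-1/ξ)`, and `t` is affine in `μ` with
slope `-ξ/σ`. The support condition `t > 0` is open in `μ`, so this identity holds near `μ` and
the two derivatives in `μ` follow from the chain rule.
-/

open Filter Topology

noncomputable def gevT (μ σ ξ x : ℝ) : ℝ := 1 + ξ * ((x - μ) / σ)

noncomputable def gevScore (μ σ ξ x : ℝ) : ℝ :=
  (ξ + 1) / σ * (gevT μ σ ξ x)⁻¹ - σ⁻¹ * gevT μ σ ξ x ^ (-1 / ξ - 1)

section

variable {μ σ ξ x : ℝ}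

lemma hasDerivAt_gevT : HasDerivAt (fun m => gevT m σ ξ x) (-(ξ / σ)) μ := by
  have h := ((((hasDerivAt_id μ).const_sub x).div_const σ).const_mul ξ).const_add 1
  exact h.congr_deriv (by ring)

lemma eventually_gevT_pos (ht : 0 < gevT μ σ ξ x) : ∀ᶠ m in 𝓝 μ, 0 < gevT m σ ξ x :=
  continuousAt_const.eventually_lt hasDerivAt_gevT.continuousAt ht

lemma log_gevDensity (hσ : σ ≠ 0) (ht : 0 < gevT μ σ ξ x) :
    log (gevDensity μ σ ξ x) =
      -log σ - (ξ + 1) / ξ * log (gevT μ σ ξ x) - gevT μ σ ξ x ^ (-1 / ξ) := by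
  rw [gevDensity, ← gevT, if_pos ht, log_mul (by positivity) (exp_ne_zero _),
    log_mul (inv_ne_zero hσ) (rpow_pos_of_pos ht _).ne', log_exp, log_rpow ht, log_inv]
  ring

lemma hasDerivAt_log_gevDensity (hσ : σ ≠ 0) (hξ : ξ ≠ 0) (ht : 0 < gevT μ σ ξ x) :
    HasDerivAt (fun m => log (gevDensity m σ ξ x)) (gevScore μ σ ξ x) μ := by
  have hlog := hasDerivAt_gevT.log ht.ne'
  have hpow := (hasDerivAt_gevT (x := x)).rpow_const (p := -1 / ξ) (Or.inl ht.ne')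
  have h := ((hlog.const_mul ((ξ + 1) / ξ)).const_sub (-log σ)).sub hpow
  refine (h.congr_of_eventuallyEq ?_).congr_deriv ?_
  · filter_upwards [eventually_gevT_pos ht] with m hm using log_gevDensity hσ hm
  · rw [gevScore]
    field_simp

lemma deriv_log_gevDensity_eventuallyEq (hσ : σ ≠ 0) (hξ : ξ ≠ 0) (ht : 0 < gevT μ σ ξ x) :
    deriv (fun m => log (gevDensity m σ ξ x)) =ᶠ[𝓝 μ] fun m => gevScore m σ ξ x := by
  filter_upwards [eventually_gevT_pos ht] with m hm
  exact (hasDerivAt_log_gevDensity hσ hξ hm).deriv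

lemma hasDerivAt_gevScore (hξ : ξ ≠ 0) (ht : gevT μ σ ξ x ≠ 0) :
    HasDerivAt (fun m => gevScore m σ ξ x)
      (-((ξ + 1) / σ ^ 2 * (gevT μ σ ξ x)⁻¹ ^ 2 * (gevT μ σ ξ x ^ (-1 / ξ) - ξ))) μ := by
  have hinv := (hasDerivAt_gevT (x := x)).inv ht
  have hpow := (hasDerivAt_gevT (x := x)).rpow_const (p := -1 / ξ - 1) (Or.inl ht)
  refine ((hinv.const_mul _).sub (hpow.const_mul _)).congr_deriv ?_
  rw [show -1 / ξ - 1 - 1 = -1 / ξ - ((2 : ℕ) : ℝ) by push_cast; ring,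
    rpow_sub_natCast ht]
  field_simp
  ring

end

/-- The negative second partial derivative of `log f(x; μ,σ,ξ)` with respect to `μ` twice
equals `((ξ+1)/σ²) t(x)⁻² (t(x)^{-1/ξ} - ξ)`: i.e. the derivative in `μ` of
`m ↦ ∂/∂μ log f(x; m,σ,ξ)` equals the negative of that quantity. -/
theorem stmt_5 (μ σ ξ x : ℝ) (hσ : 0 < σ) (hξ : ξ ≠ 0)
    (hx : 0 < 1 + ξ * ((x - μ) / σ)) :
    HasDerivAt (fun m : ℝ => deriv (fun m' : ℝ => Real.log (gevDensity m' σ ξ x)) m)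
      (-(((ξ + 1) / σ ^ 2) * ((1 + ξ * ((x - μ) / σ))⁻¹) ^ 2 *
        ((1 + ξ * ((x - μ) / σ)) ^ (-1 / ξ) - ξ))) μ :=
  (hasDerivAt_gevScore hξ hx.ne').congr_of_eventuallyEq
    (deriv_log_gevDensity_eventuallyEq hσ.ne' hξ hx)
end

section
/- Let α > 0, μ ∈ ℝ and σ > 0, and write z(x) = (x−μ)/σ. Then the two functions x ↦ (1/σ)(1 − e^{−z(x)}) · f₀(x; μ,σ)^α and x ↦ (−1/σ + (z(x)/σ)(1 − e^{−z(x)})) · f₀(x; μ,σ)^α (the location and scale score components of the Gumbel model multiplied by f₀^α) are bounded on ℝ. -/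
open Real

/-- The Gumbel density (GEV with shape `ξ = 0`):
`f₀(x; μ,σ) = (1/σ) exp(-z(x)) exp(-exp(-z(x)))` where `z(x) = (x-μ)/σ`. -/
noncomputable def gumbelDensity (μ σ x : ℝ) : ℝ :=
  σ⁻¹ * Real.exp (-((x - μ) / σ)) * Real.exp (-Real.exp (-((x - μ) / σ)))

/-!
With `t = exp (-z)` we have `f₀ ^ α = σ^(-α) t^α e^(-α t)`, and both score components are
`O((1 + t)(1 + |log t|))` since `z = -log t`. The weight `t^α e^(-α t)` absorbs this growth: for
`t ≤ 1` because `t^α |log t| < 1/α`, and for `t ≥ 1` because `(1 + t)(1 + log t) ≤ 4 t²` while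
`t^c e^(-d t) ≤ (c/d)^c` for every `c > 0`.
-/

namespace Real

theorem rpow_mul_exp_neg_mul_le {c d t : ℝ} (hc : 0 < c) (hd : 0 < d) (ht : 0 ≤ t) :
    t ^ c * exp (-(d * t)) ≤ (c / d) ^ c := by
  have hlin : t * exp (-(d / c * t)) ≤ c / d := by
    have hexp : d / c * t ≤ exp (d / c * t) := by linarith [add_one_le_exp (d / c * t)]
    rw [exp_neg, ← div_eq_mul_inv, div_le_iff₀ (exp_pos _)]
    calc t = c / d * (d / c * t) := by field_simp
      _ ≤ c / d * exp (d / c * t) := by gcongr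
  calc t ^ c * exp (-(d * t)) = (t * exp (-(d / c * t))) ^ c := by
        rw [mul_rpow ht (exp_pos _).le, ← exp_mul]
        congr 2
        field_simp
    _ ≤ (c / d) ^ c := by gcongr

theorem exists_one_add_mul_one_add_abs_log_mul_rpow_mul_exp_neg_mul_le {c d : ℝ}
    (hc : 0 < c) (hd : 0 < d) :
    ∃ C, ∀ t, 0 < t → (1 + t) * (1 + |log t|) * (t ^ c * exp (-(d * t))) ≤ C := by
  refine ⟨2 * (1 + 1 / c) + 4 * ((c + 2) / d) ^ (c + 2), fun t ht => ?_⟩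
  have hsmall : 0 ≤ 2 * (1 + 1 / c) := by positivity
  have hlarge : 0 ≤ 4 * ((c + 2) / d) ^ (c + 2) := by positivity
  rcases le_total t 1 with ht1 | ht1
  · have hlog : |log t| * t ^ c ≤ 1 / c := by
      simpa [abs_mul, abs_of_pos (rpow_pos_of_pos ht c)] using
        (abs_log_mul_self_rpow_lt t c ht ht1 hc).le
    have hpow : t ^ c ≤ 1 := rpow_le_one ht.le ht1 hc.le
    have hexp : exp (-(d * t)) ≤ 1 := exp_le_one_iff.mpr (by nlinarith)
    calc (1 + t) * (1 + |log t|) * (t ^ c * exp (-(d * t)))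
        = (1 + t) * (t ^ c + |log t| * t ^ c) * exp (-(d * t)) := by ring
      _ ≤ 2 * (1 + 1 / c) * 1 := by gcongr; linarith
      _ ≤ 2 * (1 + 1 / c) + 4 * ((c + 2) / d) ^ (c + 2) := by linarith
  · have hlog : |log t| ≤ t := by
      rw [abs_of_nonneg (log_nonneg ht1)]
      exact log_le_self ht.le
    have hpoly : (1 + t) * (1 + |log t|) ≤ 4 * t ^ 2 := by nlinarith [abs_nonneg (log t)]
    calc (1 + t) * (1 + |log t|) * (t ^ c * exp (-(d * t)))
        ≤ 4 * t ^ 2 * (t ^ c * exp (-(d * t))) := by gcongr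
      _ = 4 * (t ^ (c + 2) * exp (-(d * t))) := by rw [rpow_add ht, rpow_two]; ring
      _ ≤ 4 * ((c + 2) / d) ^ (c + 2) := by
          gcongr
          exact rpow_mul_exp_neg_mul_le (by linarith) hd ht.le
      _ ≤ 2 * (1 + 1 / c) + 4 * ((c + 2) / d) ^ (c + 2) := by linarith

end Real

theorem abs_one_sub_le_one_add {t : ℝ} (ht : 0 ≤ t) : |1 - t| ≤ 1 + t := by
  simpa [abs_of_nonneg ht] using abs_sub 1 t

theorem gumbelDensity_rpow (α μ σ x : ℝ) (hσ : 0 < σ) :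
    gumbelDensity μ σ x ^ α =
      σ⁻¹ ^ α * (exp (-((x - μ) / σ)) ^ α * exp (-(α * exp (-((x - μ) / σ))))) := by
  have hexp : exp (-exp (-((x - μ) / σ))) ^ α = exp (-(α * exp (-((x - μ) / σ)))) := by
    rw [← exp_mul]; ring_nf
  rw [gumbelDensity, mul_rpow (by positivity) (exp_pos _).le,
    mul_rpow (by positivity) (exp_pos _).le, hexp, mul_assoc]

theorem exists_abs_mul_gumbelDensity_rpow_le {α μ σ K : ℝ} (hα : 0 < α) (hσ : 0 < σ)
    (s : ℝ → ℝ)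
    (hs : ∀ x, |s x| ≤ K * ((1 + exp (-((x - μ) / σ))) * (1 + |(x - μ) / σ|))) :
    ∃ C, ∀ x, |s x * gumbelDensity μ σ x ^ α| ≤ C := by
  obtain ⟨C, hC⟩ := exists_one_add_mul_one_add_abs_log_mul_rpow_mul_exp_neg_mul_le hα hα
  refine ⟨K * σ⁻¹ ^ α * C, fun x => ?_⟩
  rw [gumbelDensity_rpow α μ σ x hσ, abs_mul,
    abs_of_nonneg (a := σ⁻¹ ^ α * _) (by positivity)]
  set z := (x - μ) / σ
  set t := exp (-z)
  have hlog : |z| = |log t| := by rw [log_exp, abs_neg]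
  calc |s x| * (σ⁻¹ ^ α * (t ^ α * exp (-(α * t))))
      ≤ K * ((1 + t) * (1 + |z|)) * (σ⁻¹ ^ α * (t ^ α * exp (-(α * t)))) := by
        gcongr
        exact hs x
    _ = K * σ⁻¹ ^ α * ((1 + t) * (1 + |log t|) * (t ^ α * exp (-(α * t)))) := by
        rw [← hlog]; ring
    _ ≤ K * σ⁻¹ ^ α * C := by
        have hK : 0 ≤ K := nonneg_of_mul_nonneg_left ((abs_nonneg _).trans (hs x)) (by positivity)
        gcongr
        exact hC _ (exp_pos _)

/-- The location and scale score components of the Gumbel model, multiplied by `f₀^α`,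
are bounded on `ℝ`. -/
theorem stmt_11 (α μ σ : ℝ) (hα : 0 < α) (hσ : 0 < σ) :
    (∃ C : ℝ, ∀ x : ℝ,
      |σ⁻¹ * (1 - Real.exp (-((x - μ) / σ))) * gumbelDensity μ σ x ^ α| ≤ C) ∧
    (∃ C : ℝ, ∀ x : ℝ,
      |(-σ⁻¹ + ((x - μ) / σ) / σ * (1 - Real.exp (-((x - μ) / σ)))) *
        gumbelDensity μ σ x ^ α| ≤ C) := by
  have hσi : 0 < σ⁻¹ := inv_pos.mpr hσ
  constructor
  · refine exists_abs_mul_gumbelDensity_rpow_le (K := σ⁻¹) hα hσ _ fun x => ?_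
    set z := (x - μ) / σ
    rw [abs_mul, abs_of_pos hσi]
    gcongr
    calc |1 - exp (-z)| ≤ 1 + exp (-z) := abs_one_sub_le_one_add (exp_pos _).le
      _ ≤ (1 + exp (-z)) * (1 + |z|) := le_mul_of_one_le_right (by positivity) (by simp)
  · refine exists_abs_mul_gumbelDensity_rpow_le (K := σ⁻¹) hα hσ _ fun x => ?_
    set z := (x - μ) / σ
    have h1 := abs_one_sub_le_one_add (exp_pos (-z)).le
    calc |-σ⁻¹ + z / σ * (1 - exp (-z))|
        ≤ |-σ⁻¹| + |z / σ * (1 - exp (-z))| := abs_add_le _ _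
      _ = σ⁻¹ * (1 + |z| * |1 - exp (-z)|) := by
        rw [abs_neg, abs_of_pos hσi, abs_mul, abs_div, abs_of_pos hσ]; ring
      _ ≤ σ⁻¹ * ((1 + exp (-z)) * (1 + |z|)) := by
        gcongr
        nlinarith [exp_pos (-z), mul_le_mul_of_nonneg_left h1 (abs_nonneg z)]
end

section
/- Let μ ∈ ℝ, σ > 0 and ξ < 0. Then for every natural number k, the limit as x → −∞ of |x|^k · f(x; μ,σ,ξ) equals 0 (the GEV density with negative shape decays faster than any polynomial in its left tail). -/
open Real Filter

/-! For `ξ < 0`, as `x → -∞` the variable `t = t(x)` tends to `+∞`, `|x|` is at most a constant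
multiple of `t`, and on the support the density is `σ⁻¹ t^(-(ξ+1)/ξ) exp (-t^b)` with `b = -1/ξ > 0`.
So `|x|^k f(x)` is dominated by a power of `t` times `exp (-t^b)`, which tends to `0`. -/

theorem tendsto_rpow_mul_exp_neg_rpow_atTop (s : ℝ) {b : ℝ} (hb : 0 < b) :
    Tendsto (fun u : ℝ => u ^ s * exp (-u ^ b)) atTop (nhds 0) := by
  have h := (tendsto_rpow_mul_exp_neg_mul_atTop_nhds_zero (s / b) 1 one_pos).comp
    (tendsto_rpow_atTop hb)
  refine h.congr' ?_
  filter_upwards [eventually_ge_atTop 0] with u hu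
  simp [← rpow_mul hu, mul_div_cancel₀ s hb.ne']

/-- The variable `t(x)` of the GEV density. -/
noncomputable def gevArg (μ σ ξ x : ℝ) : ℝ := 1 + ξ * ((x - μ) / σ)

section

variable {μ σ ξ x : ℝ}

theorem gevDensity_eq_of_gevArg_pos (hx : 0 < gevArg μ σ ξ x) :
    gevDensity μ σ ξ x =
      σ⁻¹ * gevArg μ σ ξ x ^ (-(ξ + 1) / ξ) * exp (-gevArg μ σ ξ x ^ (-1 / ξ)) :=
  if_pos hx

theorem gevDensity_nonneg (hσ : 0 ≤ σ) : 0 ≤ gevDensity μ σ ξ x := by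
  unfold gevDensity
  split_ifs <;> positivity

theorem tendsto_gevArg_atBot (hσ : 0 < σ) (hξ : ξ < 0) :
    Tendsto (gevArg μ σ ξ) atBot atTop := by
  have hlin : Tendsto (fun x : ℝ => ξ / σ * x + (1 - ξ / σ * μ)) atBot atTop :=
    (tendsto_id.const_mul_atBot_of_neg (div_neg_of_neg_of_pos hξ hσ)).atTop_add
      tendsto_const_nhds
  refine hlin.congr fun x => ?_
  unfold gevArg
  ring

theorem one_le_gevArg (hσ : 0 < σ) (hξ : ξ ≤ 0) (hx : x ≤ μ) : 1 ≤ gevArg μ σ ξ x := by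
  have : 0 ≤ ξ * ((x - μ) / σ) :=
    mul_nonneg_of_nonpos_of_nonpos hξ (div_nonpos_of_nonpos_of_nonneg (by linarith) hσ.le)
  unfold gevArg
  linarith

theorem abs_le_mul_gevArg (hσ : 0 < σ) (hξ : ξ < 0) (hx : x ≤ μ) :
    |x| ≤ (|μ| + σ / -ξ) * gevArg μ σ ξ x := by
  have ht := one_le_gevArg hσ hξ.le hx
  have hscale : 0 < σ / -ξ := div_pos hσ (neg_pos.mpr hξ)
  have hinv : μ - x = σ / -ξ * (gevArg μ σ ξ x - 1) := by
    have := hξ.ne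
    unfold gevArg
    field_simp
    ring
  calc |x| ≤ |μ| + (μ - x) := by
        linarith [abs_sub_abs_le_abs_sub x μ, abs_of_nonpos (sub_nonpos.mpr hx)]
    _ ≤ |μ| * gevArg μ σ ξ x + σ / -ξ * gevArg μ σ ξ x := by
        rw [hinv]
        nlinarith [abs_nonneg μ]
    _ = (|μ| + σ / -ξ) * gevArg μ σ ξ x := by ring

theorem abs_pow_mul_gevDensity_le (hσ : 0 < σ) (hξ : ξ < 0) (k : ℕ) (hx : x ≤ μ) :
    |x| ^ k * gevDensity μ σ ξ x ≤ σ⁻¹ * (|μ| + σ / -ξ) ^ k *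
      (gevArg μ σ ξ x ^ (k + -(ξ + 1) / ξ) * exp (-gevArg μ σ ξ x ^ (-1 / ξ))) := by
  have ht : 0 < gevArg μ σ ξ x := one_pos.trans_le (one_le_gevArg hσ hξ.le hx)
  have hpow : |x| ^ k ≤ (|μ| + σ / -ξ) ^ k * gevArg μ σ ξ x ^ k := by
    rw [← mul_pow]
    exact pow_le_pow_left₀ (abs_nonneg x) (abs_le_mul_gevArg hσ hξ hx) k
  rw [gevDensity_eq_of_gevArg_pos ht, rpow_add ht, rpow_natCast]
  calc |x| ^ k * (σ⁻¹ * gevArg μ σ ξ x ^ (-(ξ + 1) / ξ) * exp (-gevArg μ σ ξ x ^ (-1 / ξ)))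
      ≤ (|μ| + σ / -ξ) ^ k * gevArg μ σ ξ x ^ k *
          (σ⁻¹ * gevArg μ σ ξ x ^ (-(ξ + 1) / ξ) * exp (-gevArg μ σ ξ x ^ (-1 / ξ))) :=
        mul_le_mul_of_nonneg_right hpow (by positivity)
    _ = _ := by ring

end

/-- For `ξ < 0`, the GEV density decays faster than any polynomial in its left tail:
for every natural `k`, `|x|^k f(x; μ,σ,ξ) → 0` as `x → -∞`. -/
theorem stmt_16 (μ σ ξ : ℝ) (hσ : 0 < σ) (hξ : ξ < 0) (k : ℕ) :
    Tendsto (fun x : ℝ => |x| ^ k * gevDensity μ σ ξ x) atBot (nhds 0) := by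
  have hb : 0 < -1 / ξ := div_pos_of_neg_of_neg (by norm_num) hξ
  have hdom := ((tendsto_rpow_mul_exp_neg_rpow_atTop (k + -(ξ + 1) / ξ) hb).comp
    (tendsto_gevArg_atBot (μ := μ) hσ hξ)).const_mul (σ⁻¹ * (|μ| + σ / -ξ) ^ k)
  rw [mul_zero] at hdom
  refine squeeze_zero' (Eventually.of_forall fun x => ?_) ?_ hdom
  · exact mul_nonneg (pow_nonneg (abs_nonneg x) k) (gevDensity_nonneg hσ.le)
  · filter_upwards [eventually_le_atBot μ] with x hx
    exact abs_pow_mul_gevDensity_le hσ hξ k hx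
end

section
/- Let (X, 𝒜, ν) be a measure space and let f, g : X → (0, ∞) be measurable probability densities with respect to ν (∫ f dν = ∫ g dν = 1). Assume g is bounded above by a constant M and that there exist constants 0 < c ≤ C with c·g(x) ≤ f(x) ≤ C·g(x) for all x ∈ X. For α > 0 define the density power divergence d_α(g, f) = ∫ ( f^{1+α} − (1 + 1/α) g f^α + (1/α) g^{1+α} ) dν. Then as α → 0⁺, d_α(g, f) converges to the Kullback–Leibler divergence ∫ g · log(g/f) dν. -/
/-!
Pointwise the integrand is homogeneous: with `r = f/g` it equals
`g^{1+α} (r^α (r - 1) - (r^α - 1)/α)`. The difference quotient `(r^α - 1)/α` tends to `log r`,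
and for `0 < α ≤ 1` it lies between `log r` and `r - 1` (by `log t ≤ t - 1` and Bernoulli's
inequality). Since `r ∈ [c, C]` and `g^{1+α} ≤ (1 + M) g`, the integrands are dominated by a
multiple of `g`, so dominated convergence gives the limit `∫ (f - g + g log(g/f))`, and
`∫ f = ∫ g` removes the first term.
-/

open MeasureTheory Real Filter

namespace Real

lemma rpow_le_one_add_mul_sub_one {r α : ℝ} (hr : 0 ≤ r) (hα₀ : 0 ≤ α) (hα₁ : α ≤ 1) :
    r ^ α ≤ 1 + α * (r - 1) := by
  simpa using rpow_one_add_le_one_add_mul_self (s := r - 1) (by linarith) hα₀ hα₁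

lemma rpow_le_one_add {r α : ℝ} (hr : 0 ≤ r) (hα₀ : 0 ≤ α) (hα₁ : α ≤ 1) :
    r ^ α ≤ 1 + r := by
  nlinarith [rpow_le_one_add_mul_sub_one hr hα₀ hα₁]

lemma log_le_rpow_sub_one_div {r α : ℝ} (hr : 0 < r) (hα : 0 < α) :
    log r ≤ (r ^ α - 1) / α := by
  rw [le_div_iff₀ hα, mul_comm, ← log_rpow hr]
  exact log_le_sub_one_of_pos (rpow_pos_of_pos hr α)

lemma rpow_sub_one_div_le {r α : ℝ} (hr : 0 ≤ r) (hα₀ : 0 < α) (hα₁ : α ≤ 1) :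
    (r ^ α - 1) / α ≤ r - 1 := by
  rw [div_le_iff₀ hα₀]
  linarith [rpow_le_one_add_mul_sub_one hr hα₀.le hα₁]

lemma abs_rpow_sub_one_div_le {r α : ℝ} (hr : 0 < r) (hα₀ : 0 < α) (hα₁ : α ≤ 1) :
    |(r ^ α - 1) / α| ≤ max |log r| |r - 1| :=
  abs_le_max_abs_abs (log_le_rpow_sub_one_div hr hα₀) (rpow_sub_one_div_le hr.le hα₀ hα₁)

lemma tendsto_rpow_sub_one_div {r : ℝ} (hr : 0 < r) :
    Tendsto (fun α : ℝ => (r ^ α - 1) / α) (nhdsWithin 0 {0}ᶜ) (nhds (log r)) := by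
  have h := hasDerivAt_iff_tendsto_slope.mp (hasStrictDerivAt_const_rpow hr 0).hasDerivAt
  simp only [rpow_zero, one_mul] at h
  refine h.congr fun α => ?_
  rw [slope_def_field, rpow_zero, sub_zero]

lemma abs_log_le_of_mem_Icc {r c C : ℝ} (hc : 0 < c) (hr : r ∈ Set.Icc c C) :
    |log r| ≤ max |log c| |log C| :=
  abs_le_max_abs_abs (log_le_log hc hr.1) (log_le_log (hc.trans_le hr.1) hr.2)

end Real

lemma div_mem_Icc_of_mul_le {a b c C : ℝ} (hb : 0 < b) (hlow : c * b ≤ a) (hup : a ≤ C * b) :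
    a / b ∈ Set.Icc c C :=
  ⟨(le_div_iff₀ hb).2 hlow, (div_le_iff₀ hb).2 hup⟩

-- The integrand of `d_α(g, f)` at a point where `f = a` and `g = b`.
noncomputable def dpdIntegrand (α a b : ℝ) : ℝ :=
  a ^ (1 + α) - (1 + 1 / α) * b * a ^ α + (1 / α) * b ^ (1 + α)

lemma dpdIntegrand_one_right {α : ℝ} (hα : α ≠ 0) {r : ℝ} (hr : 0 < r) :
    dpdIntegrand α r 1 = r ^ α * (r - 1) - (r ^ α - 1) / α := by
  rw [dpdIntegrand, rpow_add hr, rpow_one, one_rpow]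
  field_simp
  ring

lemma dpdIntegrand_eq_rpow_mul {α a b : ℝ} (hα : α ≠ 0) (ha : 0 < a) (hb : 0 < b) :
    dpdIntegrand α a b = b ^ (1 + α) * dpdIntegrand α (a / b) 1 := by
  rw [dpdIntegrand_one_right hα (div_pos ha hb), dpdIntegrand, div_rpow ha.le hb.le,
    rpow_add ha, rpow_add hb, rpow_one, rpow_one]
  have : b ^ α ≠ 0 := (rpow_pos_of_pos hb α).ne'
  field_simp
  ring

lemma tendsto_dpdIntegrand_one_right {r : ℝ} (hr : 0 < r) :
    Tendsto (fun α => dpdIntegrand α r 1) (nhdsWithin 0 (Set.Ioi 0)) (nhds (r - 1 - log r)) := by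
  have hpow : Tendsto (fun α : ℝ => r ^ α) (nhdsWithin 0 (Set.Ioi 0)) (nhds 1) := by
    simpa using ((continuousAt_const_rpow hr.ne').tendsto (x := 0)).mono_left nhdsWithin_le_nhds
  have hslope := (tendsto_rpow_sub_one_div hr).mono_left
    (nhdsWithin_mono _ fun α (hα : 0 < α) => hα.ne')
  have hlim := (hpow.mul_const (r - 1)).sub hslope
  rw [one_mul] at hlim
  refine hlim.congr' ?_
  filter_upwards [self_mem_nhdsWithin] with α (hα : 0 < α)
  rw [dpdIntegrand_one_right hα.ne' hr]

lemma tendsto_dpdIntegrand {a b : ℝ} (ha : 0 < a) (hb : 0 < b) :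
    Tendsto (fun α => dpdIntegrand α a b) (nhdsWithin 0 (Set.Ioi 0))
      (nhds (a - b + b * log (b / a))) := by
  have hpow : Tendsto (fun α : ℝ => b ^ (1 + α)) (nhdsWithin 0 (Set.Ioi 0)) (nhds b) := by
    have : Continuous fun α : ℝ => b ^ (1 + α) :=
      continuous_const.rpow (continuous_const.add continuous_id) fun _ => Or.inl hb.ne'
    simpa using (this.tendsto 0).mono_left nhdsWithin_le_nhds
  have hlim := hpow.mul (tendsto_dpdIntegrand_one_right (div_pos ha hb))
  have hval : b * (a / b - 1 - log (a / b)) = a - b + b * log (b / a) := by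
    rw [← inv_div, log_inv]
    field_simp
    ring
  rw [hval] at hlim
  refine hlim.congr' ?_
  filter_upwards [self_mem_nhdsWithin] with α (hα : 0 < α)
  rw [dpdIntegrand_eq_rpow_mul hα.ne' ha hb]

lemma abs_dpdIntegrand_one_right_le {α r c C : ℝ} (hα₀ : 0 < α) (hα₁ : α ≤ 1) (hc : 0 < c)
    (hr : r ∈ Set.Icc c C) :
    |dpdIntegrand α r 1| ≤ (2 + C) * (1 + C) + max |log c| |log C| := by
  have hr₀ : 0 < r := hc.trans_le hr.1
  have hpow : |r ^ α| ≤ 1 + C := by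
    rw [abs_of_pos (rpow_pos_of_pos hr₀ α)]
    linarith [rpow_le_one_add hr₀.le hα₀.le hα₁, hr.2]
  have hsub : |r - 1| ≤ 1 + C := abs_le.2 ⟨by linarith [hr.2], by linarith [hr.2]⟩
  have hslope : |(r ^ α - 1) / α| ≤ max |log c| |log C| + (1 + C) :=
    (abs_rpow_sub_one_div_le hr₀ hα₀ hα₁).trans
      (max_le (by linarith [abs_log_le_of_mem_Icc hc hr, abs_nonneg (r - 1)])
        (by linarith [le_max_left |log c| |log C|, abs_nonneg (log c)]))
  calc |dpdIntegrand α r 1|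
      ≤ |r ^ α| * |r - 1| + |(r ^ α - 1) / α| := by
        rw [dpdIntegrand_one_right hα₀.ne' hr₀, ← abs_mul]
        exact abs_sub _ _
    _ ≤ (1 + C) * (1 + C) + (max |log c| |log C| + (1 + C)) := by
        gcongr
        linarith [abs_nonneg (r ^ α)]
    _ = (2 + C) * (1 + C) + max |log c| |log C| := by ring

lemma abs_dpdIntegrand_le {α a b c C M : ℝ} (hα₀ : 0 < α) (hα₁ : α ≤ 1) (hc : 0 < c)
    (hb : 0 < b) (hbM : b ≤ M) (hlow : c * b ≤ a) (hup : a ≤ C * b) :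
    |dpdIntegrand α a b| ≤ (1 + M) * ((2 + C) * (1 + C) + max |log c| |log C|) * b := by
  have ha : 0 < a := (mul_pos hc hb).trans_le hlow
  have hpow : |b ^ (1 + α)| ≤ (1 + M) * b := by
    rw [abs_of_pos (rpow_pos_of_pos hb _), rpow_add hb, rpow_one, mul_comm (1 + M)]
    gcongr
    linarith [rpow_le_one_add hb.le hα₀.le hα₁]
  rw [dpdIntegrand_eq_rpow_mul hα₀.ne' ha hb, abs_mul, mul_right_comm]
  exact mul_le_mul hpow
    (abs_dpdIntegrand_one_right_le hα₀ hα₁ hc (div_mem_Icc_of_mul_le hb hlow hup))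
    (abs_nonneg _) (by nlinarith)

lemma abs_mul_log_div_le {a b c C : ℝ} (hc : 0 < c) (hb : 0 < b)
    (hlow : c * b ≤ a) (hup : a ≤ C * b) :
    |b * log (b / a)| ≤ max |log c| |log C| * b := by
  rw [abs_mul, abs_of_pos hb, mul_comm, ← inv_div, log_inv, abs_neg]
  gcongr
  exact abs_log_le_of_mem_Icc hc (div_mem_Icc_of_mul_le hb hlow hup)

theorem stmt_19_general {X : Type*} [MeasurableSpace X] (ν : Measure X)
    (f g : X → ℝ) (hf : Measurable f) (hg : Measurable g)
    (hfpos : ∀ x, 0 < f x) (hgpos : ∀ x, 0 < g x)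
    (hfint : ∫ x, f x ∂ν = 1) (hgint : ∫ x, g x ∂ν = 1)
    (M : ℝ) (hM : ∀ x, g x ≤ M)
    (c C : ℝ) (hc : 0 < c)
    (hlow : ∀ x, c * g x ≤ f x) (hup : ∀ x, f x ≤ C * g x) :
    Tendsto
      (fun α : ℝ =>
        ∫ x, (f x ^ (1 + α) - (1 + 1 / α) * g x * f x ^ α + (1 / α) * g x ^ (1 + α)) ∂ν)
      (nhdsWithin 0 (Set.Ioi 0))
      (nhds (∫ x, g x * Real.log (g x / f x) ∂ν)) := by
  have hIf : Integrable f ν := Integrable.of_integral_ne_zero (by simp [hfint])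
  have hIg : Integrable g ν := Integrable.of_integral_ne_zero (by simp [hgint])
  have hIKL : Integrable (fun x => g x * log (g x / f x)) ν :=
    (hIg.const_mul _).mono' (by fun_prop) <| ae_of_all _ fun x =>
      abs_mul_log_div_le hc (hgpos x) (hlow x) (hup x)
  have hlim := tendsto_integral_filter_of_dominated_convergence
    (fun x => (1 + M) * ((2 + C) * (1 + C) + max |log c| |log C|) * g x)
    (Eventually.of_forall fun α => by unfold dpdIntegrand; fun_prop)
    (by
      filter_upwards [Ioc_mem_nhdsGT zero_lt_one] with α hα
      exact ae_of_all _ fun x =>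
        abs_dpdIntegrand_le hα.1 hα.2 hc (hgpos x) (hM x) (hlow x) (hup x))
    (hIg.const_mul _)
    (ae_of_all _ fun x => tendsto_dpdIntegrand (hfpos x) (hgpos x))
  rwa [integral_add (f := fun x => f x - g x) (hIf.sub hIg) hIKL, integral_sub hIf hIg,
    hfint, hgint, sub_self, zero_add] at hlim

/-- Let `f, g` be strictly positive measurable probability densities on a measure space
`(X, 𝒜, ν)`, with `g` bounded above by `M` and `c g ≤ f ≤ C g` for constants
`0 < c ≤ C`. Then as `α → 0⁺`, the density power divergence
`d_α(g, f) = ∫ (f^{1+α} - (1 + 1/α) g f^α + (1/α) g^{1+α}) dν` converges to the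
Kullback–Leibler divergence `∫ g log(g/f) dν`. -/
theorem stmt_19 {X : Type*} [MeasurableSpace X] (ν : Measure X)
    (f g : X → ℝ) (hf : Measurable f) (hg : Measurable g)
    (hfpos : ∀ x, 0 < f x) (hgpos : ∀ x, 0 < g x)
    (hfint : ∫ x, f x ∂ν = 1) (hgint : ∫ x, g x ∂ν = 1)
    (M : ℝ) (hM : ∀ x, g x ≤ M)
    (c C : ℝ) (hc : 0 < c) (hcC : c ≤ C)
    (hlow : ∀ x, c * g x ≤ f x) (hup : ∀ x, f x ≤ C * g x) :
    Tendsto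
      (fun α : ℝ =>
        ∫ x, (f x ^ (1 + α) - (1 + 1 / α) * g x * f x ^ α + (1 / α) * g x ^ (1 + α)) ∂ν)
      (nhdsWithin 0 (Set.Ioi 0))
      (nhds (∫ x, g x * Real.log (g x / f x) ∂ν)) :=
  stmt_19_general ν f g hf hg hfpos hgpos hfint hgint M hM c C hc hlow hup
end
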